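/- arXiv:0812.0776 — 7 statements merged into one kernel-verified Lean document; each statement's English description precedes it below -/
import Mathlib

section
/- If for some y the sequence Λ_p(y) converges to a finite limit L with L ≠ 0, then L · ∫₀¹ f(x) dx = 1; in particular the only possible finite positive limit of the sequence is (∫₀¹ f(x) dx)^{-1}. -/
/-!
If `Λ_p → L`, then `|Λ_q Λ_{p+1-q} - L²| ≤ C (|Λ_q - L| + |Λ_{p+1-q} - L|)`, and by Cesàro the
average of this bound over `1 ≤ q ≤ p` tends to `0`. So the right-hand side of the recurrence
differs by `o(1)` from `L²` times the Riemann sum `(1/p) ∑_{q ≤ p} f(q/(p+1))`, which tends to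
`∫₀¹ f`. Passing to the limit gives `L = L² ∫₀¹ f`, and `L ≠ 0` leaves `L ∫₀¹ f = 1`.
-/

open Filter

/-- `Λ` is the family of sequences defined by the quadratic recurrence
`Λ_1(y) = y`, `Λ_{p+1}(y) = (1/p) ∑_{q=1}^p f(q/(p+1)) Λ_q(y) Λ_{p+1-q}(y)` for `p ≥ 1`. -/
def IsLamSeq (f : ℝ → ℝ) (Λ : ℝ → ℕ → ℝ) : Prop :=
  (∀ y : ℝ, Λ y 1 = y) ∧
  ∀ y : ℝ, ∀ p : ℕ, 1 ≤ p →
    Λ y (p + 1) =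
      (1 / (p : ℝ)) * ∑ q ∈ Finset.Icc 1 p,
        f ((q : ℝ) / ((p : ℝ) + 1)) * Λ y q * Λ y (p + 1 - q)

open Topology Finset

theorem sum_Icc_one_eq_sum_range {M : Type*} [AddCommMonoid M] (g : ℕ → M) (n : ℕ) :
    ∑ q ∈ Icc 1 n, g q = ∑ i ∈ range n, g (i + 1) := by
  rw [range_eq_Ico, sum_Ico_add' g 0 n 1, zero_add, Ico_add_one_right_eq_Icc]

theorem sum_Icc_one_reflect {M : Type*} [AddCommMonoid M] (g : ℕ → M) (p : ℕ) :
    ∑ q ∈ Icc 1 p, g (p + 1 - q) = ∑ q ∈ Icc 1 p, g q := by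
  rw [← Ico_add_one_right_eq_Icc, sum_Ico_reflect g 1 (Nat.le_succ _)]
  congr 2
  omega

theorem tendsto_avg_abs_mul_reflect_sub_sq {a : ℕ → ℝ} {L : ℝ} (h : Tendsto a atTop (𝓝 L)) :
    Tendsto (fun p : ℕ => (p : ℝ)⁻¹ * ∑ q ∈ Icc 1 p, |a q * a (p + 1 - q) - L ^ 2|)
      atTop (𝓝 0) := by
  obtain ⟨C₀, hC₀⟩ := h.abs.bddAbove_range
  set C := max C₀ |L|
  have ha : ∀ n, |a n| ≤ C := fun n => (hC₀ ⟨n, rfl⟩).trans (le_max_left _ _)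
  have hL : |L| ≤ C := le_max_right _ _
  have hprod : ∀ m n, |a m * a n - L ^ 2| ≤ C * |a m - L| + C * |a n - L| := fun m n =>
    calc |a m * a n - L ^ 2| = |(a m - L) * a n + L * (a n - L)| := by ring_nf
      _ ≤ |a m - L| * |a n| + |L| * |a n - L| := by
        simpa only [abs_mul] using abs_add_le ((a m - L) * a n) (L * (a n - L))
      _ ≤ |a m - L| * C + C * |a n - L| := by gcongr; exact ha n
      _ = C * |a m - L| + C * |a n - L| := by ring
  have hcesaro : Tendsto (fun p : ℕ => (p : ℝ)⁻¹ * ∑ q ∈ Icc 1 p, |a q - L|) atTop (𝓝 0) := by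
    simp only [sum_Icc_one_eq_sum_range]
    simpa using ((h.comp (tendsto_add_atTop_nat 1)).sub_const L).abs.cesaro
  refine squeeze_zero (fun p => by positivity) (fun p => ?_)
    (by simpa using hcesaro.const_mul (2 * C))
  calc (p : ℝ)⁻¹ * ∑ q ∈ Icc 1 p, |a q * a (p + 1 - q) - L ^ 2|
      ≤ (p : ℝ)⁻¹ * ∑ q ∈ Icc 1 p, (C * |a q - L| + C * |a (p + 1 - q) - L|) := by
        gcongr with q; exact hprod _ _
    _ = 2 * C * ((p : ℝ)⁻¹ * ∑ q ∈ Icc 1 p, |a q - L|) := by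
        rw [sum_add_distrib, sum_Icc_one_reflect (fun n => C * |a n - L|), ← mul_sum]
        ring

theorem tendsto_weighted_avg_mul_reflect {a : ℕ → ℝ} {c : ℕ → ℕ → ℝ} {L I M : ℝ}
    (ha : Tendsto a atTop (𝓝 L)) (hcM : ∀ p, ∀ q ∈ Icc 1 p, |c p q| ≤ M)
    (hcI : Tendsto (fun p : ℕ => (p : ℝ)⁻¹ * ∑ q ∈ Icc 1 p, c p q) atTop (𝓝 I)) :
    Tendsto (fun p : ℕ => (p : ℝ)⁻¹ * ∑ q ∈ Icc 1 p, c p q * a q * a (p + 1 - q))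
      atTop (𝓝 (L ^ 2 * I)) := by
  have hsplit : ∀ p : ℕ, (p : ℝ)⁻¹ * ∑ q ∈ Icc 1 p, c p q * a q * a (p + 1 - q)
      - L ^ 2 * ((p : ℝ)⁻¹ * ∑ q ∈ Icc 1 p, c p q)
      = (p : ℝ)⁻¹ * ∑ q ∈ Icc 1 p, (c p q * a q * a (p + 1 - q) - c p q * L ^ 2) := by
    intro p
    rw [sum_sub_distrib, ← sum_mul]
    ring
  have hbound : ∀ p : ℕ, |(p : ℝ)⁻¹ * ∑ q ∈ Icc 1 p, c p q * a q * a (p + 1 - q)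
      - L ^ 2 * ((p : ℝ)⁻¹ * ∑ q ∈ Icc 1 p, c p q)|
      ≤ M * ((p : ℝ)⁻¹ * ∑ q ∈ Icc 1 p, |a q * a (p + 1 - q) - L ^ 2|) := by
    intro p
    rw [hsplit, abs_mul, abs_inv, Nat.abs_cast, mul_left_comm, mul_sum]
    gcongr
    refine (abs_sum_le_sum_abs _ _).trans (sum_le_sum fun q hq => ?_)
    rw [mul_assoc, ← mul_sub, abs_mul]
    gcongr
    exact hcM p q hq
  have herr := squeeze_zero_norm (fun p => (Real.norm_eq_abs _).trans_le (hbound p))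
    (by simpa using (tendsto_avg_abs_mul_reflect_sub_sq ha).const_mul M)
  have hsum := herr.add (hcI.const_mul (L ^ 2))
  rw [zero_add] at hsum
  exact hsum.congr fun p => sub_add_cancel _ _

theorem abs_riemannSum_sub_integral_le {f : ℝ → ℝ} (hf : ContinuousOn f (Set.Icc 0 1))
    {n : ℕ} (hn : n ≠ 0) {ε : ℝ}
    (hε : ∀ x ∈ Set.Icc (0 : ℝ) 1, ∀ y ∈ Set.Icc (0 : ℝ) 1,
      |x - y| ≤ (n : ℝ)⁻¹ → |f x - f y| ≤ ε) :
    |(n : ℝ)⁻¹ * ∑ i ∈ range n, f ((i + 1) / n) - ∫ x in (0 : ℝ)..1, f x| ≤ ε := by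
  have hn' : (0 : ℝ) < n := Nat.cast_pos.2 (Nat.pos_of_ne_zero hn)
  set t : ℕ → ℝ := fun i => i / n
  have ht_mono : ∀ i, t i ≤ t (i + 1) := fun i => by simp only [t]; gcongr; simp
  have ht_step : ∀ i, t (i + 1) - t i = (n : ℝ)⁻¹ := fun i => by simp only [t]; push_cast; ring
  have ht_mem : ∀ i < n, Set.uIcc (t i) (t (i + 1)) ⊆ Set.Icc 0 1 := fun i hi x hx => by
    rw [Set.uIcc_of_le (ht_mono i)] at hx
    refine ⟨(by positivity : (0 : ℝ) ≤ t i).trans hx.1, hx.2.trans ?_⟩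
    rw [div_le_one hn']
    exact_mod_cast hi
  have hint : ∀ i < n, IntervalIntegrable f MeasureTheory.volume (t i) (t (i + 1)) :=
    fun i hi => (hf.mono (ht_mem i hi)).intervalIntegrable
  have hpiece : ∀ i < n, (n : ℝ)⁻¹ * f ((i + 1) / n) - ∫ x in t i..t (i + 1), f x
      = ∫ x in t i..t (i + 1), (f ((i + 1) / n) - f x) := fun i hi => by
    rw [intervalIntegral.integral_sub intervalIntegrable_const (hint i hi),
      intervalIntegral.integral_const, ht_step, smul_eq_mul]
  have hpiece_le : ∀ i < n, |∫ x in t i..t (i + 1), (f ((i + 1) / n) - f x)| ≤ ε * (n : ℝ)⁻¹ :=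
    fun i hi => by
    have hright : ((i : ℝ) + 1) / n = t (i + 1) := by simp only [t]; push_cast; ring
    have hbound : ∀ x ∈ Set.uIoc (t i) (t (i + 1)), ‖f ((i + 1) / n) - f x‖ ≤ ε := by
      intro x hx
      rw [Set.uIoc_of_le (ht_mono i)] at hx
      have hx' : x ∈ Set.uIcc (t i) (t (i + 1)) := Set.uIoc_subset_uIcc (by
        rwa [Set.uIoc_of_le (ht_mono i)])
      refine hε _ (ht_mem i hi ?_) _ (ht_mem i hi hx') ?_
      · rw [hright]; exact Set.right_mem_uIcc
      · rw [hright, abs_of_nonneg (by linarith [hx.2]), ← ht_step i]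
        linarith [hx.1]
    have := intervalIntegral.norm_integral_le_of_norm_le_const hbound
    rwa [Real.norm_eq_abs, ht_step, abs_of_pos (inv_pos.2 hn')] at this
  have hsplit : ∑ i ∈ range n, ∫ x in t i..t (i + 1), f x = ∫ x in (0 : ℝ)..1, f x := by
    rw [intervalIntegral.sum_integral_adjacent_intervals hint]
    simp [t, hn'.ne']
  calc |(n : ℝ)⁻¹ * ∑ i ∈ range n, f ((i + 1) / n) - ∫ x in (0 : ℝ)..1, f x|
      = |∑ i ∈ range n, ∫ x in t i..t (i + 1), (f ((i + 1) / n) - f x)| := by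
        rw [← hsplit, mul_sum, ← sum_sub_distrib]
        exact congrArg _ (sum_congr rfl fun i hi => hpiece i (mem_range.1 hi))
    _ ≤ ∑ i ∈ range n, ε * (n : ℝ)⁻¹ :=
        (abs_sum_le_sum_abs _ _).trans (sum_le_sum fun i hi => hpiece_le i (mem_range.1 hi))
    _ = ε := by rw [sum_const, card_range, nsmul_eq_mul]; field_simp

theorem tendsto_riemannSum_integral {f : ℝ → ℝ} (hf : ContinuousOn f (Set.Icc 0 1)) :
    Tendsto (fun n : ℕ => (n : ℝ)⁻¹ * ∑ i ∈ range n, f ((i + 1) / n)) atTop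
      (𝓝 (∫ x in (0 : ℝ)..1, f x)) := by
  rw [Metric.tendsto_atTop]
  intro ε hε
  obtain ⟨δ, hδ, hfδ⟩ := Metric.uniformContinuousOn_iff.1
    (isCompact_Icc.uniformContinuousOn_of_continuous hf) (ε / 2) (half_pos hε)
  obtain ⟨N, hN⟩ := exists_nat_one_div_lt hδ
  refine ⟨N + 1, fun n hn => ?_⟩
  have hn_inv : (n : ℝ)⁻¹ < δ := by
    refine lt_of_le_of_lt ?_ hN
    rw [one_div]
    gcongr
    exact_mod_cast hn
  rw [Real.dist_eq]
  refine (abs_riemannSum_sub_integral_le hf (by omega) fun x hx y hy hxy => ?_).trans_lt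
    (half_lt_self hε)
  exact (hfδ x hx y hy (by rw [Real.dist_eq]; linarith)).le

theorem tendsto_avg_Icc_div_succ_integral {f : ℝ → ℝ} (hf : ContinuousOn f (Set.Icc 0 1)) :
    Tendsto (fun p : ℕ => (p : ℝ)⁻¹ * ∑ q ∈ Icc 1 p, f (q / (p + 1))) atTop
      (𝓝 (∫ x in (0 : ℝ)..1, f x)) := by
  have hinv : Tendsto (fun p : ℕ => (p : ℝ)⁻¹) atTop (𝓝 0) := tendsto_inv_atTop_nhds_zero_nat
  have hlim := (((tendsto_const_nhds (x := (1 : ℝ))).add hinv).mul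
    ((tendsto_riemannSum_integral hf).comp (tendsto_add_atTop_nat 1))).sub
    (hinv.const_mul (f 1))
  simp only [add_zero, one_mul, mul_zero, sub_zero] at hlim
  refine hlim.congr' ?_
  filter_upwards [eventually_ne_atTop 0] with p hp
  have hp' : (p : ℝ) ≠ 0 := Nat.cast_ne_zero.2 hp
  have hnodes : ∑ i ∈ range (p + 1), f ((i + 1) / (p + 1 : ℕ))
      = ∑ q ∈ Icc 1 p, f (q / (p + 1)) + f 1 := by
    rw [sum_range_succ, sum_Icc_one_eq_sum_range]
    push_cast
    rw [div_self (by positivity)]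
  simp only [Function.comp_apply, hnodes]
  push_cast
  field_simp
  ring

theorem stmt2 (f : ℝ → ℝ) (hf : ContinuousOn f (Set.Icc 0 1))
    (Λ : ℝ → ℕ → ℝ) (hΛ : IsLamSeq f Λ) (y L : ℝ) (hL : L ≠ 0)
    (hlim : Tendsto (fun p => Λ y p) atTop (nhds L)) :
    L * (∫ x in (0:ℝ)..1, f x) = 1 ∧ L = (∫ x in (0:ℝ)..1, f x)⁻¹ := by
  set I := ∫ x in (0:ℝ)..1, f x
  obtain ⟨M, hM⟩ := isCompact_Icc.exists_bound_of_continuousOn hf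
  have hweight : ∀ p : ℕ, ∀ q ∈ Icc 1 p, |f (q / (p + 1))| ≤ M := fun p q hq =>
    hM _ ⟨by positivity, (div_le_one (by positivity)).2 (by
      have : (q : ℝ) ≤ p := by exact_mod_cast (mem_Icc.1 hq).2
      linarith)⟩
  have hrec : Tendsto (fun p => Λ y (p + 1)) atTop (𝓝 (L ^ 2 * I)) := by
    refine (tendsto_weighted_avg_mul_reflect (c := fun p q => f (q / (p + 1))) hlim hweight
      (tendsto_avg_Icc_div_succ_integral hf)).congr' ?_
    filter_upwards [eventually_ge_atTop 1] with p hp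
    rw [hΛ.2 y p hp, one_div]
  have hfix : L = L ^ 2 * I := tendsto_nhds_unique (hlim.comp (tendsto_add_atTop_nat 1)) hrec
  have hLI : L * I = 1 := mul_left_cancel₀ hL (by linear_combination -hfix)
  exact ⟨hLI, eq_inv_of_mul_eq_one_left hLI⟩
end

section
/- Suppose f₁(x) = f(x) + f(1−x) is positive at every rational point of [0,1]. Then for every p ≥ 1 there exists a unique positive real number a_p such that Λ_p(a_p) = 1, and it is given explicitly by a_p = Λ_p(1)^{-1/p}. -/
open Filter

lemma lam_hom (f : ℝ → ℝ) (Λ : ℝ → ℕ → ℝ) (hΛ : IsLamSeq f Λ) (y : ℝ) :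
    ∀ p : ℕ, 1 ≤ p → Λ y p = y ^ p * Λ 1 p := by
  obtain ⟨h1, hrec⟩ := hΛ
  intro p
  induction p using Nat.strong_induction_on with
  | _ p ih =>
    intro hp
    match p, hp with
    | 1, _ => simp [h1]
    | (n+2), _ =>
      have hn1 : 1 ≤ n + 1 := by omega
      rw [hrec y (n+1) hn1, hrec 1 (n+1) hn1]
      have key : ∀ q ∈ Finset.Icc 1 (n+1),
          f ((q : ℝ) / ((n+1 : ℕ) + 1)) * Λ y q * Λ y (n + 1 + 1 - q)
            = y ^ (n+2) * (f ((q : ℝ) / ((n+1 : ℕ) + 1)) * Λ 1 q * Λ 1 (n + 1 + 1 - q)) := by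
        intro q hq
        simp only [Finset.mem_Icc] at hq
        rw [ih q (by omega) hq.1, ih (n+1+1-q) (by omega) (by omega)]
        have hpow : y ^ q * y ^ (n + 1 + 1 - q) = y ^ (n + 2) := by
          rw [← pow_add]; congr 1; omega
        rw [← hpow]; ring
      rw [Finset.sum_congr rfl key, ← Finset.mul_sum]
      ring

lemma lam_pos (f : ℝ → ℝ) (Λ : ℝ → ℕ → ℝ) (hΛ : IsLamSeq f Λ)
    (hpos : ∀ q : ℚ, (q : ℝ) ∈ Set.Icc (0:ℝ) 1 → 0 < f (q : ℝ) + f (1 - (q : ℝ))) :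
    ∀ p : ℕ, 1 ≤ p → 0 < Λ 1 p := by
  obtain ⟨h1, hrec⟩ := hΛ
  intro p
  induction p using Nat.strong_induction_on with
  | _ p ih =>
    intro hp
    match p, hp with
    | 1, _ => simp [h1]
    | (n+2), _ =>
      rw [hrec 1 (n+1) (by omega)]
      set g : ℕ → ℝ := fun q =>
        f ((q:ℝ)/(((n+1:ℕ):ℝ)+1)) * Λ 1 q * Λ 1 (n+1+1-q) with hg
      have hrefl : ∑ q ∈ Finset.Icc 1 (n+1), g q
          = ∑ q ∈ Finset.Icc 1 (n+1), g (n+2-q) := by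
        refine Finset.sum_nbij' (i := fun q => n+2-q) (j := fun q => n+2-q)
          ?_ ?_ ?_ ?_ ?_ <;> intro a ha <;> simp only [Finset.mem_Icc] at * <;>
          first
          | omega
          | (congr 1; omega)
      have hterm : ∀ q ∈ Finset.Icc 1 (n+1), 0 < g q + g (n+2-q) := by
        intro q hq
        simp only [Finset.mem_Icc] at hq
        have hAB : 0 < Λ 1 q * Λ 1 (n+1+1-q) :=
          mul_pos (ih q (by omega) hq.1) (ih _ (by omega) (by omega))
        have hcast : ((n+2-q : ℕ):ℝ) = ((n:ℝ)+2) - (q:ℝ) := by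
          rw [Nat.cast_sub (by omega)]; push_cast; ring
        have hfx : 0 < f ((q:ℝ)/((n:ℝ)+2)) + f (1 - (q:ℝ)/((n:ℝ)+2)) := by
          have := hpos ((q : ℚ)/((n:ℚ)+2)) ?_
          · convert this using 3 <;> push_cast <;> ring
          · have h2 : (0:ℝ) < (n:ℝ)+2 := by positivity
            constructor
            · push_cast; positivity
            · push_cast
              rw [div_le_one h2]
              have : (q:ℝ) ≤ (n:ℝ)+1 := by exact_mod_cast hq.2
              linarith
        have hi1 : g q = f ((q:ℝ)/((n:ℝ)+2)) * (Λ 1 q * Λ 1 (n+1+1-q)) := by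
          simp only [hg]; push_cast; ring
        have hi2 : g (n+2-q) = f (1 - (q:ℝ)/((n:ℝ)+2)) * (Λ 1 q * Λ 1 (n+1+1-q)) := by
          simp only [hg]
          rw [show n+1+1-(n+2-q) = q by omega, hcast,
            show n+1+1-q = n+2-q by omega]
          have h2 : ((n:ℝ)+2) ≠ 0 := by positivity
          rw [show (((n+1:ℕ):ℝ)+1) = ((n:ℝ)+2) by push_cast; ring, sub_div,
            div_self h2]
          ring
        rw [hi1, hi2]
        nlinarith
      have hS2 : 0 < ∑ q ∈ Finset.Icc 1 (n+1), (g q + g (n+2-q)) :=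
        Finset.sum_pos hterm ⟨1, by simp⟩
      rw [Finset.sum_add_distrib, ← hrefl] at hS2
      have hS : 0 < ∑ q ∈ Finset.Icc 1 (n+1), g q := by linarith
      have : (0:ℝ) < 1 / ((n+1:ℕ):ℝ) := by positivity
      exact mul_pos this hS

theorem stmt6 (f : ℝ → ℝ) (hf : ContinuousOn f (Set.Icc 0 1))
    (hpos : ∀ q : ℚ, (q : ℝ) ∈ Set.Icc (0:ℝ) 1 → 0 < f (q : ℝ) + f (1 - (q : ℝ)))
    (Λ : ℝ → ℕ → ℝ) (hΛ : IsLamSeq f Λ) :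
    ∀ p : ℕ, 1 ≤ p →
      (0 < (Λ 1 p) ^ (-(1 : ℝ) / (p : ℝ)) ∧
        Λ ((Λ 1 p) ^ (-(1 : ℝ) / (p : ℝ))) p = 1) ∧
      ∀ a : ℝ, 0 < a → Λ a p = 1 → a = (Λ 1 p) ^ (-(1 : ℝ) / (p : ℝ)) := by
  intro p hp
  have hL : 0 < Λ 1 p := lam_pos f Λ hΛ hpos p hp
  have hpne : ((p:ℝ)) ≠ 0 := by positivity
  set L := Λ 1 p with hLdef
  set a : ℝ := L ^ (-(1:ℝ) / (p:ℝ)) with ha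
  have hapos : 0 < a := Real.rpow_pos_of_pos hL _
  have hapow : a ^ p = L⁻¹ := by
    rw [ha, ← Real.rpow_natCast (L ^ (-(1:ℝ)/(p:ℝ))) p, ← Real.rpow_mul hL.le,
      div_mul_cancel₀ _ hpne, Real.rpow_neg_one]
  refine ⟨⟨hapos, ?_⟩, ?_⟩
  · rw [lam_hom f Λ hΛ a p hp, hapow, ← hLdef, inv_mul_cancel₀ hL.ne']
  · intro b hb hΛb
    rw [lam_hom f Λ hΛ b p hp, ← hLdef] at hΛb
    have hbpow : b ^ p = L⁻¹ := by
      field_simp at hΛb ⊢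
      linarith [hΛb]
    have : b ^ p = a ^ p := by rw [hbpow, hapow]
    have hinj : b = a := by
      have h1 : b = (b ^ p) ^ ((p:ℝ)⁻¹) := by
        rw [← Real.rpow_natCast b p, ← Real.rpow_mul hb.le,
          mul_inv_cancel₀ hpne, Real.rpow_one]
      have h2 : a = (a ^ p) ^ ((p:ℝ)⁻¹) := by
        rw [← Real.rpow_natCast a p, ← Real.rpow_mul hapos.le,
          mul_inv_cancel₀ hpne, Real.rpow_one]
      rw [h1, this, ← h2]
    exact hinj
end

section
/- If f₁ : [0,1] → ℝ is continuous and ∫₀¹ x f₁(x) dx = 1, then ∫₀¹ f₃(t) dt = 1, where f₃(t) = f₁(t) − (1/t²) ∫₀ᵗ x f₁(x) dx for t ∈ (0,1]; in other words, σ = 0 always belongs to the set Σ = {σ ∈ ℂ : ∫₀¹ t^σ f₃(t) dt = 1}. -/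
/-!
With `F t = ∫₀ᵗ x f(x) dx`, the function `G t = F t / t` has derivative `f t - F t / t²` on `(0, b)`.
Since `|F t| ≤ M t²` for a bound `M` of `|f|`, `G` extends continuously by `G 0 = 0` and the integrand
is bounded, so the fundamental theorem of calculus gives `∫₀ᵇ (f t - F t / t²) dt = G b - G 0 = F b / b`.
-/

open MeasureTheory Set Filter intervalIntegral
open scoped Topology

section

variable {f : ℝ → ℝ} {b : ℝ}

theorem intervalIntegrable_mul_self_of_continuousOn (hf : ContinuousOn f (Icc 0 b)) {t : ℝ}
    (ht : t ∈ Icc 0 b) : IntervalIntegrable (fun x => x * f x) volume 0 t :=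
  ((continuousOn_id.mul hf).mono
    (by rw [uIcc_of_le ht.1]; exact Icc_subset_Icc_right ht.2)).intervalIntegrable

theorem exists_abs_integral_mul_self_le (hf : ContinuousOn f (Icc 0 b)) :
    ∃ M, ∀ t ∈ Icc 0 b, |∫ x in (0:ℝ)..t, x * f x| ≤ M * t ^ 2 := by
  obtain ⟨M, hM⟩ := isCompact_Icc.exists_bound_of_continuousOn hf
  refine ⟨M, fun t ht => ?_⟩
  have hbound : ∀ x ∈ uIoc 0 t, ‖x * f x‖ ≤ t * M := by
    intro x hx
    rw [uIoc_of_le ht.1] at hx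
    rw [norm_mul, Real.norm_of_nonneg hx.1.le]
    exact mul_le_mul hx.2 (hM x ⟨hx.1.le, hx.2.trans ht.2⟩) (norm_nonneg _) ht.1
  calc |∫ x in (0:ℝ)..t, x * f x| ≤ t * M * |t - 0| := norm_integral_le_of_norm_le_const hbound
    _ = M * t ^ 2 := by rw [sub_zero, abs_of_nonneg ht.1]; ring

theorem continuousOn_integral_mul_self (hf : ContinuousOn f (Icc 0 b)) :
    ContinuousOn (fun t => ∫ x in (0:ℝ)..t, x * f x) (Icc 0 b) := by
  rcases lt_or_ge b 0 with hb | hb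
  · simp [Icc_eq_empty_of_lt hb]
  simpa [uIcc_of_le hb] using continuousOn_primitive_interval' (a := 0)
    (intervalIntegrable_mul_self_of_continuousOn hf ⟨hb, le_rfl⟩) (by simp)

theorem continuousOn_integral_mul_self_div (hf : ContinuousOn f (Icc 0 b)) :
    ContinuousOn (fun t => (∫ x in (0:ℝ)..t, x * f x) / t) (Icc 0 b) := by
  intro t ht
  rcases ht.1.eq_or_lt with rfl | ht0
  · obtain ⟨M, hM⟩ := exists_abs_integral_mul_self_le hf
    rw [ContinuousWithinAt, div_zero]
    refine squeeze_zero_norm' (a := fun t => M * t) ?_ ?_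
    · filter_upwards [self_mem_nhdsWithin] with x hx
      rw [Real.norm_eq_abs, abs_div, abs_of_nonneg hx.1]
      rcases hx.1.eq_or_lt with rfl | hx0
      · simp
      · rw [div_le_iff₀ hx0]
        linarith [hM x hx]
    · exact tendsto_nhdsWithin_of_tendsto_nhds (by simpa using (continuous_const_mul M).tendsto 0)
  · exact (continuousOn_integral_mul_self hf t ht).div continuousWithinAt_id ht0.ne'

theorem hasDerivAt_integral_mul_self_div (hf : ContinuousOn f (Icc 0 b)) {t : ℝ}
    (ht : t ∈ Ioo 0 b) :
    HasDerivAt (fun t => (∫ x in (0:ℝ)..t, x * f x) / t)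
      (f t - 1 / t ^ 2 * ∫ x in (0:ℝ)..t, x * f x) t := by
  have hmem : Icc 0 b ∈ 𝓝 t := Icc_mem_nhds ht.1 ht.2
  have hcont : ContinuousOn (fun x => x * f x) (Icc 0 b) := continuousOn_id.mul hf
  have hF : HasDerivAt (fun t => ∫ x in (0:ℝ)..t, x * f x) (t * f t) t :=
    integral_hasDerivAt_right (intervalIntegrable_mul_self_of_continuousOn hf ⟨ht.1.le, ht.2.le⟩)
      ⟨Icc 0 b, hmem, hcont.aestronglyMeasurable measurableSet_Icc⟩ (hcont.continuousAt hmem)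
  have ht0 : t ≠ 0 := ht.1.ne'
  refine (hF.div (hasDerivAt_id' t) ht0).congr_deriv ?_
  field_simp

theorem intervalIntegrable_integral_mul_self_div_sq (hf : ContinuousOn f (Icc 0 b)) (hb : 0 ≤ b) :
    IntervalIntegrable (fun t => 1 / t ^ 2 * ∫ x in (0:ℝ)..t, x * f x) volume 0 b := by
  obtain ⟨M, hM⟩ := exists_abs_integral_mul_self_le hf
  rw [intervalIntegrable_iff_integrableOn_Ioc_of_le hb]
  refine Integrable.mono' (integrable_const M) ?_ ?_
  · refine ContinuousOn.aestronglyMeasurable ?_ measurableSet_Ioc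
    exact (continuousOn_const.div (continuousOn_pow 2) fun x hx => pow_ne_zero 2 hx.1.ne').mul
      ((continuousOn_integral_mul_self hf).mono Ioc_subset_Icc_self)
  · filter_upwards [ae_restrict_mem measurableSet_Ioc] with x hx
    rw [Real.norm_eq_abs, abs_mul, abs_of_pos (by have := hx.1; positivity), one_div,
      inv_mul_le_iff₀ (by have := hx.1; positivity), mul_comm]
    exact hM x (Ioc_subset_Icc_self hx)

theorem integral_sub_integral_mul_self_div_sq (hf : ContinuousOn f (Icc 0 b)) (hb : 0 ≤ b) :
    ∫ t in (0:ℝ)..b, (f t - 1 / t ^ 2 * ∫ x in (0:ℝ)..t, x * f x) =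
      (∫ x in (0:ℝ)..b, x * f x) / b := by
  have hint : IntervalIntegrable (fun t => f t - 1 / t ^ 2 * ∫ x in (0:ℝ)..t, x * f x) volume 0 b :=
    (hf.intervalIntegrable_of_Icc hb).sub (intervalIntegrable_integral_mul_self_div_sq hf hb)
  rw [integral_eq_sub_of_hasDeriv_right_of_le hb (continuousOn_integral_mul_self_div hf)
    (fun t ht => (hasDerivAt_integral_mul_self_div hf ht).hasDerivWithinAt) hint]
  simp

end

theorem stmt7 (f₁ : ℝ → ℝ) (hf₁ : ContinuousOn f₁ (Set.Icc 0 1))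
    (hnorm : ∫ x in (0:ℝ)..1, x * f₁ x = 1) :
    ∫ t in (0:ℝ)..1, (f₁ t - (1 / t ^ 2) * ∫ x in (0:ℝ)..t, x * f₁ x) = 1 := by
  rw [integral_sub_integral_mul_self_div_sq hf₁ zero_le_one, hnorm, div_one]
end

section
/- Let f₁ : [0,1] → ℝ be continuous with ∫₀¹ x f₁(x) dx = 1. Then for every complex σ with Re σ > −1 and σ ≠ 1, the identity (σ/(σ−1)) F₁(σ) − 1/(σ−1) = F₃(σ) holds, where F₁(σ) = ∫₀¹ t^σ f₁(t) dt and F₃(σ) = ∫₀¹ t^σ f₃(t) dt. -/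
/-!
Let `G(t) = ∫₀ᵗ x f₁(x) dx`, so that `f₃(t) = f₁(t) - G(t) / t²`, `G(1) = 1` and `|G(t)| ≤ C t²`.
The function `Φ(t) = t^(σ-1) G(t)` has derivative `(σ-1) t^(σ-2) G(t) + t^σ f₁(t)` on `(0, 1)`,
and `Φ(t) = O(t^(Re σ + 1)) → 0` as `t → 0`. Integrating `Φ'` over `[0, 1]` gives
`(σ-1) ∫₀¹ t^(σ-2) G + F₁(σ) = G(1) = 1`, while `F₃(σ) = F₁(σ) - ∫₀¹ t^(σ-2) G`.
-/

open MeasureTheory Set Filter Topology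

section RpowBound

variable {E : Type*} [NormedAddCommGroup E]

lemma intervalIntegrable_of_norm_le_rpow {g : ℝ → E} {b D r : ℝ} (hb : 0 ≤ b) (hr : -1 < r)
    (hg : ContinuousOn g (Ioc 0 b)) (hbound : ∀ t ∈ Ioc 0 b, ‖g t‖ ≤ D * t ^ r) :
    IntervalIntegrable g volume 0 b := by
  rw [intervalIntegrable_iff_integrableOn_Ioc_of_le hb]
  refine ((intervalIntegral.intervalIntegrable_rpow' hr).const_mul D).1.mono'
    (hg.aestronglyMeasurable measurableSet_Ioc) ?_
  filter_upwards [ae_restrict_mem measurableSet_Ioc] with t ht using hbound t ht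

lemma continuousWithinAt_Icc_zero_of_norm_le_rpow {g : ℝ → E} {b D p : ℝ} (hb : 0 ≤ b)
    (hp : 0 < p) (hg0 : g 0 = 0) (hbound : ∀ t ∈ Ioc 0 b, ‖g t‖ ≤ D * t ^ p) :
    ContinuousWithinAt g (Icc 0 b) 0 := by
  rw [← Ioc_insert_left hb, continuousWithinAt_insert_self, ContinuousWithinAt, hg0]
  refine squeeze_zero_norm' (eventually_nhdsWithin_of_forall hbound) ?_
  have hrpow := (Real.continuousAt_rpow_const 0 p (Or.inr hp.le)).tendsto.const_mul D
  rw [Real.zero_rpow hp.ne', mul_zero] at hrpow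
  exact hrpow.mono_left nhdsWithin_le_nhds

end RpowBound

lemma norm_ofReal_cpow_mul_le {t : ℝ} (ht : 0 < t) (c : ℂ) {x C r : ℝ} (hx : |x| ≤ C * t ^ r) :
    ‖(t : ℂ) ^ c * (x : ℂ)‖ ≤ C * t ^ (c.re + r) := by
  rw [norm_mul, Complex.norm_cpow_eq_rpow_re_of_pos ht, Complex.norm_real, Real.norm_eq_abs,
    Real.rpow_add ht]
  calc t ^ c.re * |x| ≤ t ^ c.re * (C * t ^ r) :=
        mul_le_mul_of_nonneg_left hx (Real.rpow_nonneg ht.le _)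
    _ = C * (t ^ c.re * t ^ r) := by ring

noncomputable def momentPrimitive (f : ℝ → ℝ) (t : ℝ) : ℝ := ∫ x in (0 : ℝ)..t, x * f x

namespace momentPrimitive

variable {f : ℝ → ℝ} {b : ℝ}

@[simp]
lemma zero (f : ℝ → ℝ) : momentPrimitive f 0 = 0 := intervalIntegral.integral_same

lemma exists_abs_le (hf : ContinuousOn f (Icc 0 b)) :
    ∃ C, ∀ t ∈ Icc 0 b, |momentPrimitive f t| ≤ C * t ^ (2 : ℝ) := by
  obtain ⟨C, hC⟩ := isCompact_Icc.exists_bound_of_continuousOn hf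
  refine ⟨C, fun t ht => ?_⟩
  have hint : ∀ x ∈ uIoc 0 t, ‖x * f x‖ ≤ C * t := by
    intro x hx
    rw [uIoc_of_le ht.1] at hx
    rw [norm_mul, Real.norm_of_nonneg hx.1.le, mul_comm C]
    exact mul_le_mul hx.2 (hC x ⟨hx.1.le, hx.2.trans ht.2⟩) (norm_nonneg _) ht.1
  have := intervalIntegral.norm_integral_le_of_norm_le_const hint
  rwa [sub_zero, abs_of_nonneg ht.1, mul_assoc, ← sq, ← Real.rpow_two] at this

lemma continuousOn (hf : ContinuousOn f (Icc 0 b)) (hb : 0 ≤ b) :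
    ContinuousOn (momentPrimitive f) (Icc 0 b) := by
  have := intervalIntegral.continuousOn_primitive_interval
    ((continuousOn_id.mul (uIcc_of_le hb ▸ hf)).integrableOn_Icc (μ := volume))
  rwa [uIcc_of_le hb] at this

lemma hasDerivAt (hf : ContinuousOn f (Icc 0 b)) {t : ℝ} (ht : t ∈ Ioo 0 b) :
    HasDerivAt (momentPrimitive f) (t * f t) t := by
  have hxf : ContinuousOn (fun x => x * f x) (Icc 0 b) := continuousOn_id.mul hf
  refine intervalIntegral.integral_hasDerivAt_right ?_
    ((hxf.mono Ioo_subset_Icc_self).stronglyMeasurableAtFilter isOpen_Ioo t ht)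
    (hxf.continuousAt (Icc_mem_nhds ht.1 ht.2))
  refine (hxf.mono ?_).intervalIntegrable
  rw [uIcc_of_le ht.1.le]
  exact Icc_subset_Icc_right ht.2.le

end momentPrimitive

lemma continuousOn_ofReal_cpow_const (c : ℂ) : ContinuousOn (fun t : ℝ => (t : ℂ) ^ c) (Ioi 0) :=
  fun t ht => (Complex.continuousAt_ofReal_cpow_const t c (Or.inr (ne_of_gt ht))).continuousWithinAt

section MellinTransform

variable {f : ℝ → ℝ} {b : ℝ} {σ : ℂ}

lemma intervalIntegrable_cpow_mul (hf : ContinuousOn f (Icc 0 b)) (hb : 0 ≤ b)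
    (hσ : -1 < σ.re) : IntervalIntegrable (fun t : ℝ => (t : ℂ) ^ σ * (f t : ℂ)) volume 0 b := by
  obtain ⟨C, hC⟩ := isCompact_Icc.exists_bound_of_continuousOn hf
  refine intervalIntegrable_of_norm_le_rpow (D := C) hb hσ
    (((continuousOn_ofReal_cpow_const σ).mono Ioc_subset_Ioi_self).mul
      (Complex.continuous_ofReal.comp_continuousOn (hf.mono Ioc_subset_Icc_self))) fun t ht => ?_
  have hft : |f t| ≤ C * t ^ (0 : ℝ) := by simpa using hC t (Ioc_subset_Icc_self ht)
  simpa using norm_ofReal_cpow_mul_le ht.1 σ hft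

lemma intervalIntegrable_cpow_mul_momentPrimitive (hf : ContinuousOn f (Icc 0 b)) (hb : 0 ≤ b)
    (hσ : -1 < σ.re) :
    IntervalIntegrable (fun t : ℝ => (t : ℂ) ^ (σ - 2) * (momentPrimitive f t : ℂ)) volume 0 b := by
  obtain ⟨C, hC⟩ := momentPrimitive.exists_abs_le hf
  refine intervalIntegrable_of_norm_le_rpow (D := C) hb hσ
    (((continuousOn_ofReal_cpow_const _).mono Ioc_subset_Ioi_self).mul
      (Complex.continuous_ofReal.comp_continuousOn
        ((momentPrimitive.continuousOn hf hb).mono Ioc_subset_Icc_self))) fun t ht => ?_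
  simpa using norm_ofReal_cpow_mul_le ht.1 (σ - 2) (hC t (Ioc_subset_Icc_self ht))

lemma continuousOn_cpow_mul_momentPrimitive (hf : ContinuousOn f (Icc 0 b)) (hb : 0 ≤ b)
    (hσ : -1 < σ.re) :
    ContinuousOn (fun t : ℝ => (t : ℂ) ^ (σ - 1) * (momentPrimitive f t : ℂ)) (Icc 0 b) := by
  intro t ht
  rcases ht.1.eq_or_lt with rfl | ht0
  · obtain ⟨C, hC⟩ := momentPrimitive.exists_abs_le hf
    refine continuousWithinAt_Icc_zero_of_norm_le_rpow (D := C) (p := σ.re + 1) hb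
      (by linarith) (by simp) fun t ht => ?_
    refine (norm_ofReal_cpow_mul_le ht.1 (σ - 1) (hC t (Ioc_subset_Icc_self ht))).trans_eq ?_
    norm_num [sub_add_eq_add_sub, add_sub_assoc]
  · exact (Complex.continuousAt_ofReal_cpow_const t _ (Or.inr ht0.ne')).continuousWithinAt.mul
      (Complex.continuous_ofReal.continuousAt.comp_continuousWithinAt
        (momentPrimitive.continuousOn hf hb t ht))

lemma hasDerivAt_cpow_mul_momentPrimitive (hf : ContinuousOn f (Icc 0 b)) {t : ℝ}
    (ht : t ∈ Ioo 0 b) (σ : ℂ) :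
    HasDerivAt (fun u : ℝ => (u : ℂ) ^ (σ - 1) * (momentPrimitive f u : ℂ))
      ((σ - 1) * ((t : ℂ) ^ (σ - 2) * (momentPrimitive f t : ℂ)) + (t : ℂ) ^ σ * (f t : ℂ)) t := by
  have ht0 : (t : ℂ) ≠ 0 := Complex.ofReal_ne_zero.2 ht.1.ne'
  have hpow : HasDerivAt (fun u : ℝ => (u : ℂ) ^ (σ - 1)) ((σ - 1) * (t : ℂ) ^ (σ - 1 - 1)) t :=
    (Complex.hasStrictDerivAt_cpow_const
      (Complex.ofReal_mem_slitPlane.2 ht.1)).hasDerivAt.comp_ofReal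
  refine (hpow.mul (momentPrimitive.hasDerivAt hf ht).ofReal_comp).congr_deriv ?_
  rw [sub_sub, one_add_one_eq_two, Complex.cpow_sub _ _ ht0, Complex.cpow_sub _ _ ht0,
    Complex.cpow_one, Complex.cpow_two]
  push_cast
  field_simp

lemma sub_one_mul_integral_cpow_mul_momentPrimitive_add (hf : ContinuousOn f (Icc 0 b))
    (hb : 0 ≤ b) (hσ : -1 < σ.re) :
    (σ - 1) * (∫ t in (0 : ℝ)..b, (t : ℂ) ^ (σ - 2) * (momentPrimitive f t : ℂ))
      + ∫ t in (0 : ℝ)..b, (t : ℂ) ^ σ * (f t : ℂ)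
      = (b : ℂ) ^ (σ - 1) * (momentPrimitive f b : ℂ) := by
  rw [← intervalIntegral.integral_const_mul, ← intervalIntegral.integral_add
    ((intervalIntegrable_cpow_mul_momentPrimitive hf hb hσ).const_mul _)
    (intervalIntegrable_cpow_mul hf hb hσ),
    intervalIntegral.integral_eq_sub_of_hasDerivAt_of_le hb
      (continuousOn_cpow_mul_momentPrimitive hf hb hσ)
      (fun t ht => hasDerivAt_cpow_mul_momentPrimitive hf ht σ)
      (((intervalIntegrable_cpow_mul_momentPrimitive hf hb hσ).const_mul _).add
        (intervalIntegrable_cpow_mul hf hb hσ))]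
  simp

lemma integral_cpow_mul_sub_momentPrimitive_div_sq (hf : ContinuousOn f (Icc 0 b)) (hb : 0 ≤ b)
    (hσ : -1 < σ.re) :
    ∫ t in (0 : ℝ)..b, (t : ℂ) ^ σ * ((f t - (1 / t ^ 2) * momentPrimitive f t : ℝ) : ℂ)
      = (∫ t in (0 : ℝ)..b, (t : ℂ) ^ σ * (f t : ℂ))
        - ∫ t in (0 : ℝ)..b, (t : ℂ) ^ (σ - 2) * (momentPrimitive f t : ℂ) := by
  rw [← intervalIntegral.integral_sub (intervalIntegrable_cpow_mul hf hb hσ)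
    (intervalIntegrable_cpow_mul_momentPrimitive hf hb hσ)]
  refine intervalIntegral.integral_congr_ae (ae_of_all _ fun t ht => ?_)
  rw [uIoc_of_le hb] at ht
  have ht0 : (t : ℂ) ≠ 0 := Complex.ofReal_ne_zero.2 ht.1.ne'
  rw [Complex.cpow_sub _ _ ht0, Complex.cpow_two]
  push_cast
  field_simp

end MellinTransform

theorem stmt8 (f₁ : ℝ → ℝ) (hf₁ : ContinuousOn f₁ (Set.Icc 0 1))
    (hnorm : ∫ x in (0:ℝ)..1, x * f₁ x = 1)
    (σ : ℂ) (hσ : -1 < σ.re) (hσ1 : σ ≠ 1) :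
    (σ / (σ - 1)) * (∫ t in (0:ℝ)..1, (t : ℂ) ^ σ * (f₁ t : ℂ)) - 1 / (σ - 1) =
      ∫ t in (0:ℝ)..1,
        (t : ℂ) ^ σ * ((f₁ t - (1 / t ^ 2) * ∫ x in (0:ℝ)..t, x * f₁ x : ℝ) : ℂ) := by
  have hG1 : momentPrimitive f₁ 1 = 1 := hnorm
  have hkey := sub_one_mul_integral_cpow_mul_momentPrimitive_add hf₁ zero_le_one hσ
  rw [hG1, Complex.ofReal_one, Complex.one_cpow, one_mul] at hkey
  change _ = ∫ t in (0 : ℝ)..1,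
    (t : ℂ) ^ σ * ((f₁ t - (1 / t ^ 2) * momentPrimitive f₁ t : ℝ) : ℂ)
  rw [integral_cpow_mul_sub_momentPrimitive_div_sq hf₁ zero_le_one hσ]
  have hσ1' : σ - 1 ≠ 0 := sub_ne_zero.2 hσ1
  field_simp
  linear_combination hkey
end

section
/- Let f₁ : [0,1] → ℝ be continuous and nonnegative with ∫₀¹ x f₁(x) dx = 1. Then F₃(1) = 1 + ∫₀¹ x (log x) f₁(x) dx < 1; in particular σ = 1 does not belong to Σ = {σ ∈ ℂ : F₃(σ) = 1}. -/
/-!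
With `G t = ∫₀ᵗ x f₁ x`, the integrand of `F₃(1)` is `t f₁ t - G t / t`, so `F₃(1) = 1 - ∫₀¹ G t / t`.
Integrating by parts against `log`, with boundary term `log t * G t = O(t log t) → 0` at `0`, gives
`∫₀¹ G t / t = -∫₀¹ x log x f₁ x`. That integrand is `≤ 0`, and it is not a.e. zero because
`∫₀¹ x f₁ x = 1`, so the integral is negative.
-/

open MeasureTheory Set Filter Topology intervalIntegral Real Asymptotics

section Primitive

variable {g : ℝ → ℝ} {b : ℝ}

theorem exists_abs_primitive_le_mul (hg : ContinuousOn g (Icc 0 b)) :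
    ∃ M, ∀ t ∈ Icc 0 b, |∫ x in 0..t, g x| ≤ M * t := by
  obtain ⟨M, hM⟩ := isCompact_Icc.exists_bound_of_continuousOn hg
  refine ⟨M, fun t ht => ?_⟩
  have hbound := norm_integral_le_of_norm_le_const (a := 0) (b := t) (C := M) fun x hx =>
    hM x (Ioc_subset_Icc_self.trans (Icc_subset_Icc_right ht.2) (uIoc_of_le ht.1 ▸ hx))
  simpa [abs_of_nonneg ht.1] using hbound

theorem continuousOn_primitive_Icc (hg : ContinuousOn g (Icc 0 b)) (hb : 0 ≤ b) :
    ContinuousOn (fun t => ∫ x in 0..t, g x) (Icc 0 b) := by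
  have h := continuousOn_primitive_interval (μ := volume) (uIcc_of_le hb ▸ hg.integrableOn_Icc)
  rwa [uIcc_of_le hb] at h

theorem intervalIntegrable_primitive_div_self (hg : ContinuousOn g (Icc 0 b)) (hb : 0 ≤ b) :
    IntervalIntegrable (fun t => (∫ x in 0..t, g x) / t) volume 0 b := by
  obtain ⟨M, hM⟩ := exists_abs_primitive_le_mul hg
  have hcont : ContinuousOn (fun t => (∫ x in 0..t, g x) / t) (Ioc 0 b) :=
    ((continuousOn_primitive_Icc hg hb).mono Ioc_subset_Icc_self).div continuousOn_id
      fun t ht => ht.1.ne'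
  refine (intervalIntegrable_const (c := M)).mono_fun' ?_ ?_ <;> rw [uIoc_of_le hb]
  · exact hcont.aestronglyMeasurable measurableSet_Ioc
  · filter_upwards [ae_restrict_mem measurableSet_Ioc] with t ht
    rw [norm_div, Real.norm_eq_abs, Real.norm_of_nonneg ht.1.le, div_le_iff₀ ht.1]
    exact hM t (Ioc_subset_Icc_self ht)

theorem tendsto_log_mul_primitive_nhdsGT_zero (hg : ContinuousOn g (Icc 0 b)) (hb : 0 < b) :
    Tendsto (fun t => log t * ∫ x in 0..t, g x) (𝓝[>] 0) (𝓝 0) := by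
  obtain ⟨M, hM⟩ := exists_abs_primitive_le_mul hg
  have hO : (fun t => ∫ x in 0..t, g x) =O[𝓝[>] 0] id := by
    refine IsBigO.of_bound M ?_
    filter_upwards [Ioo_mem_nhdsGT hb] with t ht
    simpa [abs_of_pos ht.1] using hM t (Ioo_subset_Icc_self ht)
  refine ((isBigO_refl log _).mul hO).trans_tendsto ?_
  simpa using tendsto_log_mul_rpow_nhdsGT_zero zero_lt_one

theorem integral_primitive_div_self (hg : ContinuousOn g (Icc 0 b)) (hb : 0 < b) :
    ∫ t in 0..b, (∫ x in 0..t, g x) / t =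
      log b * (∫ x in 0..b, g x) - ∫ t in 0..b, log t * g t := by
  set G := fun t => ∫ x in 0..t, g x
  have hGc := continuousOn_primitive_Icc hg hb.le
  have hcont : ContinuousOn (fun t => log t * G t) (Icc 0 b) := by
    intro t ht
    rcases ht.1.eq_or_lt with rfl | ht0
    -- `log 0 = 0`, so continuity at `0` is exactly the vanishing of the boundary term.
    · have h0 : ContinuousWithinAt (fun t => log t * G t) (Ioi 0) 0 := by
        simpa [ContinuousWithinAt] using tendsto_log_mul_primitive_nhdsGT_zero hg hb
      exact (continuousWithinAt_Ioi_iff_Ici.1 h0).mono Icc_subset_Ici_self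
    · exact (continuousAt_log ht0.ne').continuousWithinAt.mul (hGc t ht)
  have hderiv : ∀ t ∈ Ioo 0 b, HasDerivAt (fun t => log t * G t) (G t / t + log t * g t) t := by
    intro t ht
    have hGd : HasDerivAt G (g t) t :=
      integral_hasDerivAt_right
        ((hg.mono (Icc_subset_Icc_right ht.2.le)).intervalIntegrable_of_Icc ht.1.le)
        (hg.mono Ioo_subset_Icc_self |>.stronglyMeasurableAtFilter isOpen_Ioo t ht)
        (hg.continuousAt (Icc_mem_nhds ht.1 ht.2))
    simpa only [div_eq_inv_mul] using (hasDerivAt_log ht.1.ne').fun_mul hGd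
  have hlog : IntervalIntegrable (fun t => log t * g t) volume 0 b :=
    intervalIntegrable_log'.mul_continuousOn (uIcc_of_le hb.le ▸ hg)
  have hftc := integral_eq_sub_of_hasDerivAt_of_le hb.le hcont hderiv
    ((intervalIntegrable_primitive_div_self hg hb.le).add hlog)
  rw [integral_add (intervalIntegrable_primitive_div_self hg hb.le) hlog] at hftc
  simp only [log_zero, zero_mul, sub_zero] at hftc
  linarith

end Primitive

theorem integral_log_mul_neg {g : ℝ → ℝ} (hg : ContinuousOn g (Icc 0 1))
    (hnn : ∀ x ∈ Ioc (0:ℝ) 1, 0 ≤ g x) (hpos : 0 < ∫ x in (0:ℝ)..1, g x) :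
    ∫ x in (0:ℝ)..1, log x * g x < 0 := by
  have hlog : IntervalIntegrable (fun x => log x * g x) volume 0 1 :=
    intervalIntegrable_log'.mul_continuousOn (uIcc_of_le (zero_le_one' ℝ) ▸ hg)
  have hg_nonneg : 0 ≤ᵐ[volume.restrict (uIoc 0 1)] g := by
    rw [uIoc_of_le (zero_le_one' ℝ)]
    exact (ae_restrict_iff' measurableSet_Ioc).2 (ae_of_all _ hnn)
  have hlog_nonneg : 0 ≤ᵐ[volume.restrict (uIoc 0 1)] fun x => -(log x * g x) := by
    rw [uIoc_of_le (zero_le_one' ℝ)]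
    refine (ae_restrict_iff' measurableSet_Ioc).2 (ae_of_all _ fun x hx => ?_)
    exact neg_nonneg.2 (mul_nonpos_of_nonpos_of_nonneg (log_nonpos hx.1.le hx.2) (hnn x hx))
  obtain ⟨-, hsupp⟩ := (integral_pos_iff_support_of_nonneg_ae' hg_nonneg
    (hg.intervalIntegrable_of_Icc (zero_le_one' ℝ))).1 hpos
  rw [← neg_pos, ← intervalIntegral.integral_neg,
    integral_pos_iff_support_of_nonneg_ae' hlog_nonneg hlog.neg]
  refine ⟨zero_lt_one' ℝ, hsupp.trans_le ?_⟩
  calc volume (Function.support g ∩ Ioc 0 1)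
      = volume (Function.support g ∩ Ioo 0 1) :=
        measure_congr ((ae_eq_refl _).inter Ioo_ae_eq_Ioc.symm)
    _ ≤ volume (Function.support (fun x => -(log x * g x)) ∩ Ioc 0 1) :=
        measure_mono fun x ⟨hx, hx'⟩ => ⟨neg_ne_zero.2 (mul_ne_zero (log_neg hx'.1 hx'.2).ne hx),
          Ioo_subset_Ioc_self hx'⟩

theorem integral_mul_sub_primitive_div_sq {f : ℝ → ℝ} (hf : ContinuousOn f (Icc 0 1)) :
    ∫ t in (0:ℝ)..1, t * (f t - 1 / t ^ 2 * ∫ x in (0:ℝ)..t, x * f x) =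
      (∫ x in (0:ℝ)..1, x * f x) + ∫ x in (0:ℝ)..1, x * log x * f x := by
  have hg : ContinuousOn (fun x => x * f x) (Icc 0 1) := continuousOn_id.mul hf
  calc ∫ t in (0:ℝ)..1, t * (f t - 1 / t ^ 2 * ∫ x in (0:ℝ)..t, x * f x)
      = ∫ t in (0:ℝ)..1, (t * f t - (∫ x in (0:ℝ)..t, x * f x) / t) := by
        refine integral_congr fun t _ => ?_
        rcases eq_or_ne t 0 with rfl | ht
        · simp
        · field_simp
    _ = (∫ x in (0:ℝ)..1, x * f x) - ∫ t in (0:ℝ)..1, (∫ x in (0:ℝ)..t, x * f x) / t :=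
        integral_sub (hg.intervalIntegrable_of_Icc (zero_le_one' ℝ))
          (intervalIntegrable_primitive_div_self hg (zero_le_one' ℝ))
    _ = (∫ x in (0:ℝ)..1, x * f x) + ∫ x in (0:ℝ)..1, x * log x * f x := by
        rw [integral_primitive_div_self hg one_pos, log_one, zero_mul, zero_sub, sub_neg_eq_add]
        congr 1
        exact integral_congr fun x _ => by ring

theorem stmt10 (f₁ : ℝ → ℝ) (hf₁ : ContinuousOn f₁ (Set.Icc 0 1))
    (hnn : ∀ x ∈ Set.Icc (0:ℝ) 1, 0 ≤ f₁ x)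
    (hnorm : ∫ x in (0:ℝ)..1, x * f₁ x = 1) :
    (∫ t in (0:ℝ)..1,
        (t : ℂ) ^ (1 : ℂ) * ((f₁ t - (1 / t ^ 2) * ∫ x in (0:ℝ)..t, x * f₁ x : ℝ) : ℂ)) =
      ((1 + ∫ x in (0:ℝ)..1, x * Real.log x * f₁ x : ℝ) : ℂ) ∧
    (1 + ∫ x in (0:ℝ)..1, x * Real.log x * f₁ x) < 1 ∧
    (∫ t in (0:ℝ)..1,
        (t : ℂ) ^ (1 : ℂ) * ((f₁ t - (1 / t ^ 2) * ∫ x in (0:ℝ)..t, x * f₁ x : ℝ) : ℂ)) ≠ 1 := by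
  have hreal := integral_mul_sub_primitive_div_sq hf₁
  rw [hnorm] at hreal
  have hF₃ : (∫ t in (0:ℝ)..1,
      (t : ℂ) ^ (1 : ℂ) * ((f₁ t - (1 / t ^ 2) * ∫ x in (0:ℝ)..t, x * f₁ x : ℝ) : ℂ)) =
      ((1 + ∫ x in (0:ℝ)..1, x * Real.log x * f₁ x : ℝ) : ℂ) := by
    rw [← hreal, ← intervalIntegral.integral_ofReal]
    refine integral_congr fun t _ => ?_
    push_cast
    rw [Complex.cpow_one]
  have hlog_neg : ∫ x in (0:ℝ)..1, x * Real.log x * f₁ x < 0 := by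
    have hpos : ∀ x ∈ Ioc (0:ℝ) 1, 0 ≤ x * f₁ x := fun x hx =>
      mul_nonneg hx.1.le (hnn x (Ioc_subset_Icc_self hx))
    calc ∫ x in (0:ℝ)..1, x * Real.log x * f₁ x = ∫ x in (0:ℝ)..1, log x * (x * f₁ x) :=
          integral_congr fun x _ => by ring
      _ < 0 := integral_log_mul_neg (continuousOn_id.mul hf₁) hpos (by rw [hnorm]; exact one_pos)
  refine ⟨hF₃, by linarith, ?_⟩
  rw [hF₃, Ne, ← Complex.ofReal_one, Complex.ofReal_inj]
  linarith
end

section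
/- Let g : [0,1] → ℂ be continuously differentiable. Then for every real μ > −1 and every real ν ≠ 0, |∫₀¹ t^{μ + iν} g(t) dt| ≤ (|g(1)| + ∫₀¹ |g'(t)| dt)/|ν|. In particular ∫₀¹ t^{μ+iν} g(t) dt → 0 as |ν| → ∞, uniformly in μ over μ ≥ σ₀ for any σ₀ > −1. -/
/-!
Integrate by parts against the antiderivative `t ^ (s + 1) / (s + 1)` of `t ^ s`, which vanishes
at `0` when `Re s > -1` and has modulus at most `1 / ‖s + 1‖` on `[0, 1]`. This bounds the integral
by `(‖g 1‖ + ∫ ‖g'‖) / ‖s + 1‖`, and `‖s + 1‖ ≥ |Im s|`.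
-/

open Complex Set intervalIntegral

theorem norm_ofReal_cpow_le_one {s : ℂ} (hs : 0 < s.re) {t : ℝ} (ht : t ∈ Icc (0 : ℝ) 1) :
    ‖(t : ℂ) ^ s‖ ≤ 1 := by
  rw [norm_cpow_eq_rpow_re_of_nonneg ht.1 hs.ne']
  exact Real.rpow_le_one ht.1 ht.2 hs.le

section IntegrationByParts

variable {g g' : ℝ → ℂ} {s : ℂ}

theorem integral_ofReal_cpow_mul_eq (hs : -1 < s.re)
    (hderiv : ∀ t ∈ Icc (0 : ℝ) 1, HasDerivWithinAt g (g' t) (Icc 0 1) t)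
    (hg' : ContinuousOn g' (Icc 0 1)) :
    ∫ t in (0 : ℝ)..1, (t : ℂ) ^ s * g t =
      g 1 / (s + 1) - ∫ t in (0 : ℝ)..1, (t : ℂ) ^ (s + 1) / (s + 1) * g' t := by
  have hre : 0 < (s + 1).re := by simp only [add_re, one_re]; linarith
  have hs1 : s + 1 ≠ 0 := fun h => by simp [h] at hre
  have hs_ne : s ≠ -1 := fun h => hs1 (by rw [h]; ring)
  have hIoo : Ioo (min (0 : ℝ) 1) (max 0 1) = Ioo 0 1 := by simp
  have hparts := integral_mul_deriv_eq_deriv_mul_of_hasDeriv_right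
    (u := g) (v := fun t : ℝ => (t : ℂ) ^ (s + 1) / (s + 1)) (u' := g') (v' := fun t => (t : ℂ) ^ s)
    (by rw [uIcc_of_le zero_le_one]; exact fun t ht => (hderiv t ht).continuousWithinAt)
    ((continuous_ofReal_cpow_const hre).div_const _).continuousOn
    (fun x hx => by
      rw [hIoo] at hx
      exact (hderiv x (Ioo_subset_Icc_self hx)).mono_of_mem_nhdsWithin
        (Icc_mem_nhdsGT_of_mem ⟨hx.1.le, hx.2⟩))
    (fun x hx => by
      rw [hIoo] at hx
      exact (hasDerivAt_ofReal_cpow_const' hx.1.ne' hs_ne).hasDerivWithinAt)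
    (hg'.intervalIntegrable_of_Icc zero_le_one) (intervalIntegrable_cpow' hs)
  simp only [ofReal_one, one_cpow, ofReal_zero, zero_cpow hs1, zero_div, mul_zero, sub_zero]
    at hparts
  simp only [mul_comm _ (g _), mul_comm _ (g' _), hparts, mul_one_div]

theorem norm_integral_ofReal_cpow_mul_le (hs : -1 < s.re)
    (hderiv : ∀ t ∈ Icc (0 : ℝ) 1, HasDerivWithinAt g (g' t) (Icc 0 1) t)
    (hg' : ContinuousOn g' (Icc 0 1)) :
    ‖∫ t in (0 : ℝ)..1, (t : ℂ) ^ s * g t‖ ≤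
      (‖g 1‖ + ∫ t in (0 : ℝ)..1, ‖g' t‖) / ‖s + 1‖ := by
  have hre : 0 < (s + 1).re := by simp only [add_re, one_re]; linarith
  have hremainder : ‖∫ t in (0 : ℝ)..1, (t : ℂ) ^ (s + 1) / (s + 1) * g' t‖ ≤
      ∫ t in (0 : ℝ)..1, ‖g' t‖ / ‖s + 1‖ := by
    refine norm_integral_le_of_norm_le zero_le_one (Filter.Eventually.of_forall fun t ht => ?_)
      ((hg'.norm.div_const _).intervalIntegrable_of_Icc zero_le_one)
    rw [norm_mul, norm_div, div_mul_eq_mul_div]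
    gcongr
    exact mul_le_of_le_one_left (norm_nonneg _)
      (norm_ofReal_cpow_le_one hre (Ioc_subset_Icc_self ht))
  rw [integral_ofReal_cpow_mul_eq hs hderiv hg', add_div, ← integral_div]
  calc _ ≤ ‖g 1 / (s + 1)‖ + _ := norm_sub_le _ _
    _ ≤ _ := by rw [norm_div]; gcongr

end IntegrationByParts

theorem stmt12 (g g' : ℝ → ℂ)
    (hderiv : ∀ t ∈ Set.Icc (0:ℝ) 1, HasDerivWithinAt g (g' t) (Set.Icc 0 1) t)
    (hg' : ContinuousOn g' (Set.Icc 0 1)) :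
    (∀ μ ν : ℝ, -1 < μ → ν ≠ 0 →
      ‖(∫ t in (0:ℝ)..1, (t : ℂ) ^ ((μ : ℂ) + (ν : ℂ) * Complex.I) * g t)‖ ≤
        (‖g 1‖ + ∫ t in (0:ℝ)..1, ‖g' t‖) / |ν|) ∧
    (∀ σ₀ : ℝ, -1 < σ₀ → ∀ ε : ℝ, 0 < ε → ∃ N : ℝ, ∀ μ ν : ℝ, σ₀ ≤ μ → N ≤ |ν| →
      ‖(∫ t in (0:ℝ)..1, (t : ℂ) ^ ((μ : ℂ) + (ν : ℂ) * Complex.I) * g t)‖ < ε) := by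
  set C := ‖g 1‖ + ∫ t in (0 : ℝ)..1, ‖g' t‖
  have hC : 0 ≤ C :=
    add_nonneg (norm_nonneg _) (integral_nonneg zero_le_one fun t _ => norm_nonneg _)
  have decay : ∀ μ ν : ℝ, -1 < μ → ν ≠ 0 →
      ‖∫ t in (0 : ℝ)..1, (t : ℂ) ^ ((μ : ℂ) + (ν : ℂ) * I) * g t‖ ≤ C / |ν| := by
    intro μ ν hμ hν
    refine (norm_integral_ofReal_cpow_mul_le (by simpa using hμ) hderiv hg').trans ?_
    refine div_le_div_of_nonneg_left hC (abs_pos.mpr hν) ?_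
    simpa using abs_im_le_norm ((μ : ℂ) + ν * I + 1)
  refine ⟨decay, fun σ₀ hσ₀ ε hε => ⟨(C + 1) / ε, fun μ ν hμ hν => ?_⟩⟩
  have hN : 0 < (C + 1) / ε := by positivity
  calc _ ≤ C / |ν| := decay μ ν (hσ₀.trans_le hμ) (abs_pos.mp (hN.trans_le hν))
    _ ≤ C / ((C + 1) / ε) := div_le_div_of_nonneg_left hC hN hν
    _ < ε := by
      rw [div_div_eq_mul_div, div_lt_iff₀ (by positivity)]
      linarith
end

section
/- (Proposition 2) Let f₁ : [0,1] → ℝ be twice continuously differentiable, and set f₃(t) = f₁(t) − (1/t²) ∫₀ᵗ x f₁(x) dx. Then for every σ₀ > −1, the set Σ ∩ {σ ∈ ℂ : Re σ > σ₀} = {σ ∈ ℂ : Re σ > σ₀ and ∫₀¹ t^σ f₃(t) dt = 1} is finite. -/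
/-!
`F σ = ∫₀¹ t^σ f₃(t) dt` is a Mellin transform of a bounded function, hence holomorphic on the
half-plane `Re σ > -1`. Moreover `f₃` is bounded with bounded derivative on `(0,1)`: writing
`f₃'(t) = f₁'(t) - (2/t³) ∫₀ᵗ x (f₁ t - f₁ x) dx` shows `|f₃'| ≤ 3 Lip(f₁)`. Integrating `t^σ`
by parts then gives `|F σ| ≤ C / |σ + 1|`. So `F` is not identically `1`, and all solutions of
`F σ = 1` with `Re σ > σ₀` lie in the compact set `{|σ + 1| ≤ C, Re σ ≥ σ₀}` inside the
half-plane, where they are isolated by the identity theorem, hence finitely many.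
-/

open MeasureTheory Set Filter Topology
open scoped NNReal

theorem AnalyticOnNhd.finite_inter_preimage_of_isCompact {𝕜 E : Type*}
    [NontriviallyNormedField 𝕜] [NormedAddCommGroup E] [NormedSpace 𝕜 E] {g : 𝕜 → E}
    {U K : Set 𝕜} {c : E} {z₁ : 𝕜} (hg : AnalyticOnNhd 𝕜 g U) (hU : IsPreconnected U)
    (hK : IsCompact K) (hKU : K ⊆ U) (hz₁ : z₁ ∈ U) (hgz₁ : g z₁ ≠ c) :
    (K ∩ g ⁻¹' {c}).Finite := by
  rcases hg.eqOn_or_eventually_ne_of_preconnected analyticOnNhd_const hU with h | h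
  · exact absurd (h hz₁) hgz₁
  · exact (hK.finite_sdiff_of_mem_codiscreteWithin (codiscreteWithin_mono hKU h)).subset
      fun z hz => ⟨hz.1, fun hne => hne hz.2⟩

theorem Complex.finite_setOf_re_gt_eq_one_of_norm_le_div {g : ℂ → ℂ} {C σ₀ : ℝ}
    (hσ₀ : -1 < σ₀) (hg : AnalyticOnNhd ℂ g {σ | -1 < σ.re})
    (hdecay : ∀ σ : ℂ, -1 < σ.re → ‖g σ‖ ≤ C / ‖σ + 1‖) :
    {σ : ℂ | σ₀ < σ.re ∧ g σ = 1}.Finite := by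
  have hroot : ∀ σ : ℂ, -1 < σ.re → g σ = 1 → ‖σ + 1‖ ≤ C := fun σ hσ hgσ => by
    have hpos : 0 < ‖σ + 1‖ := norm_pos_iff.2 fun h0 => by
      simp [eq_neg_of_add_eq_zero_left h0] at hσ
    simpa [hgσ, one_le_div hpos] using hdecay σ hσ
  set K := Metric.closedBall (-1 : ℂ) C ∩ {σ | σ₀ ≤ σ.re}
  have hK : IsCompact K :=
    (isCompact_closedBall _ _).inter_right (isClosed_le continuous_const Complex.continuous_re)
  have hKU : K ⊆ {σ | -1 < σ.re} := fun σ hσ => hσ₀.trans_le hσ.2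
  have hfar : g ((|C| : ℝ) : ℂ) ≠ 1 := fun h1 => by
    have := hroot _ (by simp; linarith [abs_nonneg C]) h1
    rw [← Complex.ofReal_one, ← Complex.ofReal_add, Complex.norm_real, Real.norm_eq_abs,
      abs_of_nonneg (by positivity)] at this
    linarith [le_abs_self C]
  refine (hg.finite_inter_preimage_of_isCompact (convex_halfSpace_re_gt (-1)).isPreconnected
    hK hKU (by simp; linarith [abs_nonneg C]) hfar).subset fun σ ⟨hre, hgσ⟩ => ⟨⟨?_, hre.le⟩, hgσ⟩
  rw [Metric.mem_closedBall, dist_eq_norm, sub_neg_eq_add]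
  exact hroot σ (hσ₀.trans hre) hgσ

section CpowIntegral

variable {h : ℝ → ℂ} {M : ℝ}

theorem intervalIntegrable_cpow_mul_of_norm_le {σ : ℂ} (hσ : -1 < σ.re)
    (hm : AEStronglyMeasurable h (volume.restrict (Ioc 0 1)))
    (hb : ∀ t ∈ Ioc (0 : ℝ) 1, ‖h t‖ ≤ M) :
    IntervalIntegrable (fun t : ℝ => (t : ℂ) ^ σ * h t) volume 0 1 := by
  rw [intervalIntegrable_iff_integrableOn_Ioc_of_le zero_le_one]
  exact (intervalIntegral.intervalIntegrable_cpow' hσ).1.mul_bdd hm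
    ((ae_restrict_iff' measurableSet_Ioc).2 (ae_of_all _ hb))

theorem integral_cpow_mul_eq_mellin (σ : ℂ) :
    ∫ t in (0 : ℝ)..1, (t : ℂ) ^ σ * h t = mellin ((Ioc 0 1).indicator h) (σ + 1) := by
  rw [intervalIntegral.integral_of_le zero_le_one, mellin, add_sub_cancel_right,
    ← integral_indicator measurableSet_Ioc, ← integral_indicator measurableSet_Ioi]
  congr 1 with t
  by_cases ht : t ∈ Ioc 0 1
  · simp [ht, ht.1]
  · by_cases ht0 : 0 < t <;> simp [ht, ht0]

theorem analyticOnNhd_integral_cpow_mul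
    (hm : AEStronglyMeasurable h (volume.restrict (Ioc 0 1)))
    (hb : ∀ t ∈ Ioc (0 : ℝ) 1, ‖h t‖ ≤ M) :
    AnalyticOnNhd ℂ (fun σ : ℂ => ∫ t in (0 : ℝ)..1, (t : ℂ) ^ σ * h t) {σ | -1 < σ.re} := by
  have hH : Integrable ((Ioc 0 1).indicator h) :=
    (IntegrableOn.of_bound measure_Ioc_lt_top hm M
      ((ae_restrict_iff' measurableSet_Ioc).2 (ae_of_all _ hb))).integrable_indicator
      measurableSet_Ioc
  have hHb : ∀ t, ‖(Ioc 0 1).indicator h t‖ ≤ max M 0 := fun t => by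
    by_cases ht : t ∈ Ioc 0 1
    · simpa [ht] using (hb t ht).trans (le_max_left M 0)
    · simp [ht]
  simp_rw [integral_cpow_mul_eq_mellin]
  refine DifferentiableOn.analyticOnNhd (fun σ hσ => ?_)
    (isOpen_lt continuous_const Complex.continuous_re)
  refine (mellin_differentiableAt_of_isBigO_rpow (a := σ.re + 2) (b := 0)
    hH.integrableOn.locallyIntegrableOn ?_ (by simp) ?_ (by simp; linarith [hσ.out])
    ).comp σ (differentiableAt_id.add_const 1) |>.differentiableWithinAt
  · refine (Asymptotics.isBigO_zero _ _).congr' ?_ EventuallyEq.rfl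
    filter_upwards [eventually_gt_atTop 1] with t ht
    simp [ht.not_ge]
  · refine Asymptotics.isBigO_of_le' (c := max M 0) _ fun t => ?_
    simpa using hHb t

theorem integral_cpow_mul_eq_sub_integral {M' : ℝ} {σ : ℂ} (hσ : -1 < σ.re)
    (hc : ContinuousOn h (Ioc 0 1)) (hb : ∀ t ∈ Ioc (0 : ℝ) 1, ‖h t‖ ≤ M)
    (hd : ∀ t ∈ Ioo (0 : ℝ) 1, DifferentiableAt ℝ h t)
    (hd' : ∀ t ∈ Ioo (0 : ℝ) 1, ‖deriv h t‖ ≤ M') :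
    ∫ t in (0 : ℝ)..1, (t : ℂ) ^ σ * h t
      = h 1 / (σ + 1) - ∫ t in (0 : ℝ)..1, (t : ℂ) ^ (σ + 1) / (σ + 1) * deriv h t := by
  have hs : 0 < (σ + 1).re := by simp; linarith
  have hs0 : σ + 1 ≠ 0 := fun h0 => by simp [h0] at hs
  set u : ℝ → ℂ := fun t => (t : ℂ) ^ (σ + 1) / (σ + 1)
  have hu : Continuous u := continuous_iff_continuousAt.2 fun t =>
    (Complex.continuousAt_ofReal_cpow_const t _ (Or.inl hs)).div_const _
  have hu0 : u 0 = 0 := by simp [u, Complex.zero_cpow hs0]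
  -- `h` may jump at `0`, but `u * h` is continuous there because `u 0 = 0` and `h` is bounded
  have hw : ContinuousOn (fun t => u t * h t) (Icc 0 1) := by
    intro t ht
    rcases ht.1.eq_or_lt with rfl | ht0
    · rw [← Ioc_insert_left zero_le_one, continuousWithinAt_insert_self, ContinuousWithinAt,
        hu0, zero_mul]
      refine ((hu0 ▸ hu.tendsto 0).mono_left nhdsWithin_le_nhds).zero_mul_isBoundedUnder_le
        (isBoundedUnder_of_eventually_le (a := M) ?_)
      filter_upwards [self_mem_nhdsWithin] with t ht using hb t ht
    · exact (hu.continuousWithinAt.mul (hc t ⟨ht0, ht.2⟩)).mono_of_mem_nhdsWithin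
        (mem_nhdsWithin.2 ⟨Ioi 0, isOpen_Ioi, ht0, fun x hx => ⟨hx.1, hx.2.2⟩⟩)
  have hI₁ : IntervalIntegrable (fun t : ℝ => (t : ℂ) ^ σ * h t) volume 0 1 :=
    intervalIntegrable_cpow_mul_of_norm_le hσ (hc.aestronglyMeasurable measurableSet_Ioc) hb
  have hI₂ : IntervalIntegrable (fun t => u t * deriv h t) volume 0 1 := by
    rw [intervalIntegrable_iff_integrableOn_Ioo_of_le zero_le_one]
    exact (hu.continuousOn.integrableOn_Icc.mono_set Ioo_subset_Icc_self).mul_bdd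
      (measurable_deriv h).aestronglyMeasurable
      ((ae_restrict_iff' measurableSet_Ioo).2 (ae_of_all _ hd'))
  have hftc := intervalIntegral.integral_eq_sub_of_hasDerivAt_of_le zero_le_one hw
    (fun t ht => (hasDerivAt_ofReal_cpow_const' ht.1.ne'
      (fun h1 => hs0 (by simp [h1]))).mul (hd t ht).hasDerivAt) (hI₁.add hI₂)
  rw [intervalIntegral.integral_add hI₁ hI₂, hu0, zero_mul, sub_zero, ← eq_sub_iff_add_eq] at hftc
  rw [hftc]
  simp [u, div_eq_inv_mul, mul_assoc]

theorem norm_integral_cpow_mul_le_div {M' : ℝ} {σ : ℂ} (hσ : -1 < σ.re)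
    (hc : ContinuousOn h (Ioc 0 1)) (hb : ∀ t ∈ Ioc (0 : ℝ) 1, ‖h t‖ ≤ M)
    (hd : ∀ t ∈ Ioo (0 : ℝ) 1, DifferentiableAt ℝ h t)
    (hd' : ∀ t ∈ Ioo (0 : ℝ) 1, ‖deriv h t‖ ≤ M') :
    ‖∫ t in (0 : ℝ)..1, (t : ℂ) ^ σ * h t‖ ≤ (M + M') / ‖σ + 1‖ := by
  have hs : 0 < (σ + 1).re := by simp; linarith
  have hrest : ‖∫ t in (0 : ℝ)..1, (t : ℂ) ^ (σ + 1) / (σ + 1) * deriv h t‖ ≤ M' / ‖σ + 1‖ := by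
    rw [intervalIntegral.integral_of_le zero_le_one, integral_Ioc_eq_integral_Ioo]
    refine (norm_setIntegral_le_of_norm_le_const (C := M' / ‖σ + 1‖) measure_Ioo_lt_top
      fun t ht => ?_).trans (by simp)
    rw [norm_mul, norm_div, Complex.norm_cpow_eq_rpow_re_of_nonneg ht.1.le hs.ne',
      div_mul_eq_mul_div]
    exact div_le_div_of_nonneg_right ((mul_le_of_le_one_left (norm_nonneg _)
      (Real.rpow_le_one ht.1.le ht.2.le hs.le)).trans (hd' t ht)) (norm_nonneg _)
  rw [integral_cpow_mul_eq_sub_integral hσ hc hb hd hd', add_div]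
  refine (norm_sub_le _ _).trans (add_le_add ?_ hrest)
  rw [norm_div]
  exact div_le_div_of_nonneg_right (hb 1 (right_mem_Ioc.2 zero_lt_one)) (norm_nonneg _)

end CpowIntegral

theorem abs_intervalIntegral_id_mul_le {f : ℝ → ℝ} {M t : ℝ} (ht : 0 ≤ t)
    (hf : ∀ x ∈ Ioc 0 t, |f x| ≤ M) : |∫ x in (0 : ℝ)..t, x * f x| ≤ M * t ^ 2 := by
  have hbound : ∀ x ∈ uIoc 0 t, ‖x * f x‖ ≤ M * t := fun x hx => by
    rw [uIoc_of_le ht] at hx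
    rw [norm_mul, Real.norm_eq_abs, Real.norm_eq_abs, abs_of_pos hx.1]
    nlinarith [hf x hx, abs_nonneg (f x), hx.2]
  have := intervalIntegral.norm_integral_le_of_norm_le_const hbound
  rw [sub_zero, abs_of_nonneg ht] at this
  simpa [sq, mul_assoc] using this

/-- At `t = 0` this is `f₁ 0` (as `1 / 0 = 0`), not the limit `f₁ 0 / 2`. -/
noncomputable def f₃ (f₁ : ℝ → ℝ) (t : ℝ) : ℝ :=
  f₁ t - (1 / t ^ 2) * ∫ x in (0 : ℝ)..t, x * f₁ x

section f₃

variable {f₁ : ℝ → ℝ} {t : ℝ}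

theorem abs_f₃_le {M : ℝ} (hM : ∀ x ∈ Icc (0 : ℝ) 1, |f₁ x| ≤ M) (ht : t ∈ Ioc (0 : ℝ) 1) :
    |f₃ f₁ t| ≤ 2 * M := by
  have hG := abs_intervalIntegral_id_mul_le ht.1.le fun x hx => hM x ⟨hx.1.le, hx.2.trans ht.2⟩
  have ht2 : 0 < t ^ 2 := pow_pos ht.1 2
  calc |f₃ f₁ t| ≤ |f₁ t| + 1 / t ^ 2 * |∫ x in (0 : ℝ)..t, x * f₁ x| := by
        exact (abs_sub _ _).trans_eq (by rw [abs_mul, abs_of_pos (one_div_pos.2 ht2)])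
    _ ≤ M + 1 / t ^ 2 * (M * t ^ 2) := by
        gcongr
        exact hM t ⟨ht.1.le, ht.2⟩
    _ = 2 * M := by field_simp [ht.1.ne']; ring

theorem continuousOn_f₃ (hc : ContinuousOn f₁ (Icc 0 1)) : ContinuousOn (f₃ f₁) (Ioc 0 1) := by
  have hG : ContinuousOn (fun t => ∫ x in (0 : ℝ)..t, x * f₁ x) (Icc 0 1) := by
    rw [← uIcc_of_le zero_le_one]
    exact intervalIntegral.continuousOn_primitive_interval
      ((continuousOn_id.mul hc).integrableOn_Icc.mono_set (uIcc_of_le zero_le_one).subset)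
  refine (hc.mono Ioc_subset_Icc_self).sub (ContinuousOn.mul ?_ (hG.mono Ioc_subset_Icc_self))
  exact continuousOn_const.div (continuousOn_pow 2) fun x hx => pow_ne_zero 2 hx.1.ne'

theorem hasDerivAt_f₃ (hc : ContinuousOn f₁ (Icc 0 1)) (hd : DifferentiableAt ℝ f₁ t)
    (ht : t ∈ Ioo (0 : ℝ) 1) :
    HasDerivAt (f₃ f₁) (deriv f₁ t - 2 / t ^ 3 * ∫ x in (0 : ℝ)..t, x * (f₁ t - f₁ x)) t := by
  have hxf : ContinuousOn (fun x => x * f₁ x) (Icc 0 1) := continuousOn_id.mul hc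
  have hint : IntervalIntegrable (fun x => x * f₁ x) volume 0 t :=
    (hxf.mono (by rw [uIcc_of_le ht.1.le]; exact Icc_subset_Icc_right ht.2.le)).intervalIntegrable
  have hG : HasDerivAt (fun t => ∫ x in (0 : ℝ)..t, x * f₁ x) (t * f₁ t) t :=
    intervalIntegral.integral_hasDerivAt_right hint
      ((hxf.mono Ioo_subset_Icc_self).stronglyMeasurableAtFilter isOpen_Ioo t ht)
      (hxf.continuousAt (Icc_mem_nhds ht.1 ht.2))
  have hsplit : ∫ x in (0 : ℝ)..t, x * (f₁ t - f₁ x)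
      = t ^ 2 / 2 * f₁ t - ∫ x in (0 : ℝ)..t, x * f₁ x := by
    simp_rw [mul_sub]
    rw [intervalIntegral.integral_sub
      ((continuous_mul_const (f₁ t)).intervalIntegrable 0 t) hint,
      intervalIntegral.integral_mul_const, integral_id]
    ring
  refine (hd.hasDerivAt.sub ((hasDerivAt_const t (1 : ℝ)).div (hasDerivAt_pow 2 t)
    (pow_ne_zero 2 ht.1.ne') |>.mul hG)).congr_deriv ?_
  rw [hsplit, Pi.div_apply]
  field_simp [ht.1.ne']
  ring

theorem abs_deriv_f₃_le {L : ℝ≥0} (hL : LipschitzOnWith L f₁ (Icc 0 1))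
    (hd : DifferentiableAt ℝ f₁ t) (ht : t ∈ Ioo (0 : ℝ) 1) : |deriv (f₃ f₁) t| ≤ 3 * L := by
  have hf₁' : |deriv f₁ t| ≤ L := norm_deriv_le_of_lipschitzOn (Icc_mem_nhds ht.1 ht.2) hL
  have hinc : ∀ x ∈ Ioc 0 t, |f₁ t - f₁ x| ≤ L * t := fun x hx => by
    have := hL.dist_le_mul t ⟨ht.1.le, ht.2.le⟩ x ⟨hx.1.le, hx.2.trans ht.2.le⟩
    rw [Real.dist_eq, Real.dist_eq, abs_of_nonneg (sub_nonneg.2 hx.2)] at this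
    nlinarith [hx.1, L.2]
  have hI := abs_intervalIntegral_id_mul_le ht.1.le hinc
  have ht3 : 0 < t ^ 3 := pow_pos ht.1 3
  rw [(hasDerivAt_f₃ hL.continuousOn hd ht).deriv]
  calc |deriv f₁ t - 2 / t ^ 3 * ∫ x in (0 : ℝ)..t, x * (f₁ t - f₁ x)|
      ≤ |deriv f₁ t| + 2 / t ^ 3 * |∫ x in (0 : ℝ)..t, x * (f₁ t - f₁ x)| := by
        exact (abs_sub _ _).trans_eq (by rw [abs_mul, abs_of_pos (div_pos two_pos ht3)])
    _ ≤ L + 2 / t ^ 3 * (L * t * t ^ 2) := by gcongr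
    _ = 3 * L := by field_simp [ht.1.ne']; ring

end f₃

theorem stmt13 (f₁ : ℝ → ℝ) (hf₁ : ContDiffOn ℝ 2 f₁ (Set.Icc 0 1))
    (σ₀ : ℝ) (hσ₀ : -1 < σ₀) :
    {σ : ℂ | σ₀ < σ.re ∧
      (∫ t in (0:ℝ)..1,
          (t : ℂ) ^ σ * ((f₁ t - (1 / t ^ 2) * ∫ x in (0:ℝ)..t, x * f₁ x : ℝ) : ℂ)) = 1}.Finite := by
  obtain ⟨M, hM⟩ := isCompact_Icc.exists_bound_of_continuousOn hf₁.continuousOn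
  obtain ⟨L, hL⟩ := hf₁.exists_lipschitzOnWith two_ne_zero (convex_Icc 0 1) isCompact_Icc
  have hd : ∀ t ∈ Ioo (0 : ℝ) 1, DifferentiableAt ℝ f₁ t := fun t ht =>
    (hf₁.differentiableOn two_ne_zero t (Ioo_subset_Icc_self ht)).differentiableAt
      (Icc_mem_nhds ht.1 ht.2)
  set h : ℝ → ℂ := fun t => (f₃ f₁ t : ℂ)
  have hc : ContinuousOn h (Ioc 0 1) :=
    Complex.continuous_ofReal.comp_continuousOn (continuousOn_f₃ hf₁.continuousOn)
  have hb : ∀ t ∈ Ioc (0 : ℝ) 1, ‖h t‖ ≤ 2 * M := fun t ht => by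
    simpa [h] using abs_f₃_le hM ht
  have hderiv : ∀ t ∈ Ioo (0 : ℝ) 1, HasDerivAt h ((deriv (f₃ f₁) t : ℝ) : ℂ) t := fun t ht =>
    (hasDerivAt_f₃ hf₁.continuousOn (hd t ht) ht).differentiableAt.hasDerivAt.ofReal_comp
  change {σ : ℂ | σ₀ < σ.re ∧ ∫ t in (0 : ℝ)..1, (t : ℂ) ^ σ * h t = 1}.Finite
  exact Complex.finite_setOf_re_gt_eq_one_of_norm_le_div hσ₀
    (analyticOnNhd_integral_cpow_mul (hc.aestronglyMeasurable measurableSet_Ioc) hb)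
    fun σ hσ => norm_integral_cpow_mul_le_div hσ hc hb (fun t ht => (hderiv t ht).differentiableAt)
      fun t ht => by
        rw [(hderiv t ht).deriv, Complex.norm_real, Real.norm_eq_abs]
        exact abs_deriv_f₃_le hL (hd t ht) ht
end
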